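/- For every real ε with 0 < ε < 1 and all integers k,r ≥ 1 such that r < (1−ε)/ε, there exists an assignment of nonnegative (possibly infinite) weights to the edges of G(k,r,2) such that the resulting shortest-path metric contains an ε-ladder (x_1,p_1),…,(x_ℓ,p_ℓ) of length ℓ = 2^C(k+r−2, r−1) and width 1 (where C(·,·) is the binomial coefficient) with the following additional properties: for every i ∈ [ℓ], the pair x_i p_i is an edge of the matching M(k,r,2), and for all i,j ∈ [ℓ], dist(x_j, p_i) ≥ 1. -/

import Mathlib

open scoped ENNReal

namespace ScatterDim

variable {V : Type}





/-- Total weight of a walk in an edge-weighted graph. -/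
noncomputable def walkWeight {G : SimpleGraph V} (w : Sym2 V → ℝ≥0∞)
    {u v : V} (p : G.Walk u v) : ℝ≥0∞ :=
  (p.edges.map w).sum

/-- Shortest-path metric of an edge-weighted graph: the infimum of the total
weights of walks between the two vertices. -/
noncomputable def gdist (G : SimpleGraph V) (w : Sym2 V → ℝ≥0∞) (u v : V) : ℝ≥0∞ :=
  ⨅ p : G.Walk u v, walkWeight w p

/-- Shortest-path distance measured within the subgraph induced on `S`
(`⊤` if one of the endpoints is not in `S`). -/
noncomputable def distOn (G : SimpleGraph V) (w : Sym2 V → ℝ≥0∞) (S : Set V)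
    (u v : V) : ℝ≥0∞ :=
  ⨅ (hu : u ∈ S), ⨅ (hv : v ∈ S), ⨅ (p : (G.induce S).Walk ⟨u, hu⟩ ⟨v, hv⟩),
    (p.edges.map (fun e => w (e.map Subtype.val))).sum

/-- Distance between two sets of vertices inside the subgraph induced on `S`. -/
noncomputable def setDistOn (G : SimpleGraph V) (w : Sym2 V → ℝ≥0∞) (S : Set V)
    (A B : Set V) : ℝ≥0∞ :=
  ⨅ a ∈ A, ⨅ b ∈ B, distOn G w S a b

/-- Distance from a point to a set. -/
noncomputable def pdist (G : SimpleGraph V) (w : Sym2 V → ℝ≥0∞) (u : V) (X : Set V) : ℝ≥0∞ :=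
  ⨅ x ∈ X, gdist G w u x

/-- `Y` is weakly `r`-reachable from `X` (with respect to the partition `P`
ordered by `le`): there is a path of total weight at most `r` from a vertex of `X`
to a vertex of `Y` in the subgraph induced on the union of the parts `Z` with `Y ⪯ Z`. -/
def WReach (G : SimpleGraph V) (w : Sym2 V → ℝ≥0∞) (P : Set (Set V))
    (le : Set V → Set V → Prop) (r : ℝ) (X Y : Set V) : Prop :=
  setDistOn G w (⋃₀ {Z | Z ∈ P ∧ le Y Z}) X Y ≤ ENNReal.ofReal r

/-- The weak coloring number of `G` with respect to the partition `P`
and the order `le`: the maximum over `X ∈ P` of the number of parts weakly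
`r`-reachable from `X`. -/
noncomputable def wcol (G : SimpleGraph V) (w : Sym2 V → ℝ≥0∞) (P : Set (Set V))
    (le : Set V → Set V → Prop) (r : ℝ) : ℕ :=
  ⨆ X ∈ P, {Y | Y ∈ P ∧ WReach G w P le r X Y}.ncard

/-- `le` is a total (linear) order on the collection `P`. -/
def IsLinearOrderOn {α : Type} (P : Set α) (le : α → α → Prop) : Prop :=
  (∀ X ∈ P, le X X) ∧
  (∀ X ∈ P, ∀ Y ∈ P, le X Y → le Y X → X = Y) ∧
  (∀ X ∈ P, ∀ Y ∈ P, ∀ Z ∈ P, le X Y → le Y Z → le X Z) ∧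
  (∀ X ∈ P, ∀ Y ∈ P, le X Y ∨ le Y X)

/-- An `ε`-ladder of width `r` and length `ℓ` in the metric `dist`. -/
def IsLadder (dist : V → V → ℝ≥0∞) (ε r : ℝ) (ℓ : ℕ) (x p : Fin ℓ → V) : Prop :=
  (∀ i j : Fin ℓ, j < i → dist (p j) (x i) ≤ ENNReal.ofReal r) ∧
  (∀ i : Fin ℓ, ENNReal.ofReal ((1 + ε) * r) < dist (p i) (x i))

/-- `G` contains the complete graph on `h` vertices as a minor, witnessed by
pairwise disjoint connected nonempty branch sets that are pairwise adjacent. -/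
def HasCompleteMinor (G : SimpleGraph V) (h : ℕ) : Prop :=
  ∃ B : Fin h → Set V,
    (∀ i, (G.induce (B i)).Connected) ∧
    (∀ i j, i ≠ j → Disjoint (B i) (B j)) ∧
    (∀ i j, i ≠ j → ∃ u ∈ B i, ∃ v ∈ B j, G.Adj u v)

/-- `(T, bag)` is a tree decomposition of `G`. -/
def IsTreeDecompOf {ι : Type} (G : SimpleGraph V) (T : SimpleGraph ι) (bag : ι → Set V) : Prop :=
  T.IsTree ∧
  (∀ u v : V, G.Adj u v → ∃ t, u ∈ bag t ∧ v ∈ bag t) ∧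
  (∀ v : V, (T.induce {t | v ∈ bag t}).Connected)

/-- `G` has treewidth at most `n`. -/
def TreewidthAtMost (G : SimpleGraph V) (n : ℕ) : Prop :=
  ∃ (ι : Type) (T : SimpleGraph ι) (bag : ι → Set V),
    IsTreeDecompOf G T bag ∧ ∀ t, (bag t).ncard ≤ n + 1

/-- `D` is an `r`-cover of the edge-weighted graph `(G, w)`. -/
def IsCover (G : SimpleGraph V) (w : Sym2 V → ℝ≥0∞) (r : ℝ) (D : Set (Set V)) : Prop :=
  ∀ v : V, ∃ A ∈ D, ∀ u : V, gdist G w v u ≤ ENNReal.ofReal r → u ∈ A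





/-- Vertices of the complete rooted `d`-ary tree in which every leaf-to-root
path has `n` edges: sequences over `Fin d` of length at most `n`
(the root is the empty sequence, children prepend a symbol). -/
def TV (d n : ℕ) : Type := {l : List (Fin d) // l.length ≤ n}

/-- The complete rooted `d`-ary tree (as a graph). -/
def dAryTree (d n : ℕ) : SimpleGraph (TV d n) where
  Adj a b := (∃ i : Fin d, a.1 = i :: b.1) ∨ (∃ i : Fin d, b.1 = i :: a.1)
  symm := ⟨fun a b h => h.symm⟩
  loopless := by
    constructor
    intro a h
    rcases h with ⟨i, h⟩ | ⟨i, h⟩ <;>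
      · have := congrArg List.length h
        simp at this

/-- The complete rooted `d`-ary tree with an edge added between every pair of
vertices in ancestor–descendant relation. -/
def dAryTreeCl (d n : ℕ) : SimpleGraph (TV d n) where
  Adj a b := a ≠ b ∧ (a.1 <:+ b.1 ∨ b.1 <:+ a.1)
  symm := ⟨fun a b h => ⟨h.1.symm, h.2.symm⟩⟩
  loopless := ⟨fun a h => h.1 rfl⟩

/-- Leaves of the complete rooted `d`-ary tree of depth `n`. -/
def leaves (d n : ℕ) : Set (TV d n) := {a | a.1.length = n}

/-- Adjacency after creating a twin `v'` for every `v ∈ L`: the twin `v'`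
is adjacent to `v` and to all neighbours of `v`. -/
def twinAdj (G : SimpleGraph V) (L : Set V) : (V ⊕ ↥L) → (V ⊕ ↥L) → Prop
  | Sum.inl u, Sum.inl v => G.Adj u v
  | Sum.inl u, Sum.inr v => u = v.1 ∨ G.Adj u v.1
  | Sum.inr v, Sum.inl u => u = v.1 ∨ G.Adj u v.1
  | Sum.inr u, Sum.inr v => G.Adj u.1 v.1

/-- The graph obtained from `G` by creating a twin for every vertex in `L`. -/
def addTwins (G : SimpleGraph V) (L : Set V) : SimpleGraph (V ⊕ ↥L) where
  Adj := twinAdj G L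
  symm := by
    constructor
    rintro (u | u) (v | v) h <;> simp only [twinAdj] at h ⊢
    · exact h.symm
    · exact h
    · exact h
    · exact h.symm
  loopless := by
    constructor
    rintro (u | u) h <;> simp only [twinAdj] at h
    · exact G.irrefl h
    · exact G.irrefl h

/-- The matching consisting of the pairs (leaf, its twin). -/
def twinM (L : Set V) : Set ((V ⊕ ↥L) × (V ⊕ ↥L)) :=
  {e | ∃ v : ↥L, e = (Sum.inl v.1, Sum.inr v)}

/-- A graph together with a distinguished matching (as a set of ordered pairs). -/
structure GD where
  V : Type
  G : SimpleGraph V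
  M : Set (V × V)

/-- `G(1,r,d)`: the complete rooted `d`-ary tree of depth `r+1` with a twin
created for every leaf. -/
def base1 (d r : ℕ) : GD :=
  ⟨TV d r ⊕ ↥(leaves d r), addTwins (dAryTree d r) (leaves d r), twinM (leaves d r)⟩

/-- `G(k,1,d)`: the complete rooted `d`-ary tree of depth `k+1`, with edges added
between all ancestor–descendant pairs, and a twin created for every leaf. -/
def base2 (d k : ℕ) : GD :=
  ⟨TV d k ⊕ ↥(leaves d k), addTwins (dAryTreeCl d k) (leaves d k), twinM (leaves d k)⟩

/-- Adjacency of the inductive step: a copy of `A`, and for every matching edge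
`e` of `A`, `d` fresh copies of `B`, each completely joined to both endpoints of `e`. -/
def stepAdj (d : ℕ) (A B : GD) :
    (A.V ⊕ (↥A.M × Fin d × B.V)) → (A.V ⊕ (↥A.M × Fin d × B.V)) → Prop
  | Sum.inl u, Sum.inl v => A.G.Adj u v
  | Sum.inl u, Sum.inr q => u = q.1.1.1 ∨ u = q.1.1.2
  | Sum.inr q, Sum.inl u => u = q.1.1.1 ∨ u = q.1.1.2
  | Sum.inr q, Sum.inr q' => q.1 = q'.1 ∧ q.2.1 = q'.2.1 ∧ B.G.Adj q.2.2 q'.2.2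

/-- The inductive step of the construction of `G(k+1,r+1,d)` from
`A = G(k+1,r,d)` and `B = G(k,r+1,d)`. -/
def stepGD (d : ℕ) (A B : GD) : GD where
  V := A.V ⊕ (↥A.M × Fin d × B.V)
  G :=
    { Adj := stepAdj d A B
      symm := by
        constructor
        rintro (u | q) (v | q') h <;> simp only [stepAdj] at h ⊢
        · exact h.symm
        · exact h
        · exact h
        · exact ⟨h.1.symm, h.2.1.symm, h.2.2.symm⟩
      loopless := by
        constructor
        rintro (u | q) h <;> simp only [stepAdj] at h
        · exact A.G.irrefl h
        · exact B.G.irrefl h.2.2 }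
  M := {q | ∃ (e : ↥A.M) (i : Fin d) (a b : B.V), (a, b) ∈ B.M ∧
        q = (Sum.inr (e, i, a), Sum.inr (e, i, b))}

/-- The graphs `G(k,r,d)` with their matchings `M(k,r,d)`, defined for `k, r ≥ 1`
(the values at `k = 0` or `r = 0` are irrelevant placeholders). -/
def GKRD (d : ℕ) : ℕ → ℕ → GD
  | 0, r => base1 d r
  | 1, r => base1 d r
  | (k+2), 0 => base2 d (k+2)
  | (k+2), 1 => base2 d (k+2)
  | (k+2), (r+2) => stepGD d (GKRD d (k+2) (r+1)) (GKRD d (k+1) (r+2))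
  termination_by k r => k + r

/-! ### Auxiliary infrastructure -/

lemma walkWeight_nil {G : SimpleGraph V} (w : Sym2 V → ℝ≥0∞) (u : V) :
    walkWeight w (SimpleGraph.Walk.nil : G.Walk u u) = 0 := by
  simp [walkWeight]

lemma walkWeight_cons {G : SimpleGraph V} (w : Sym2 V → ℝ≥0∞) {u a v : V}
    (h : G.Adj u a) (q : G.Walk a v) :
    walkWeight w (SimpleGraph.Walk.cons h q) = w s(u, a) + walkWeight w q := by
  simp [walkWeight]

lemma gdist_le_walk {G : SimpleGraph V} (w : Sym2 V → ℝ≥0∞) {u v : V} (p : G.Walk u v) :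
    gdist G w u v ≤ walkWeight w p := iInf_le _ p

lemma gdist_self_le {G : SimpleGraph V} (w : Sym2 V → ℝ≥0∞) (u : V) :
    gdist G w u u ≤ 0 := by
  simpa [walkWeight] using gdist_le_walk w (SimpleGraph.Walk.nil : G.Walk u u)

lemma gdist_edge {G : SimpleGraph V} (w : Sym2 V → ℝ≥0∞) {u v : V} (h : G.Adj u v) :
    gdist G w u v ≤ w s(u, v) := by
  simpa [walkWeight] using gdist_le_walk w (SimpleGraph.Walk.cons h SimpleGraph.Walk.nil)

lemma gdist_comm {G : SimpleGraph V} (w : Sym2 V → ℝ≥0∞) (u v : V) :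
    gdist G w u v = gdist G w v u := by
  have key : ∀ a b : V, gdist G w a b ≤ gdist G w b a := by
    intro a b
    refine le_iInf fun p => ?_
    refine le_trans (gdist_le_walk w p.reverse) (le_of_eq ?_)
    simp [walkWeight, SimpleGraph.Walk.edges_reverse, List.map_reverse, List.sum_reverse]
  exact le_antisymm (key u v) (key v u)

lemma gdist_triangle {G : SimpleGraph V} (w : Sym2 V → ℝ≥0∞) (u v x : V) :
    gdist G w u x ≤ gdist G w u v + gdist G w v x := by
  have h2 : ∀ p : G.Walk u v, gdist G w u x ≤ walkWeight w p + gdist G w v x := by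
    intro p
    conv_rhs => rw [gdist, ENNReal.add_iInf]
    refine le_iInf fun q => ?_
    refine le_trans (gdist_le_walk w (p.append q)) (le_of_eq ?_)
    simp [walkWeight, SimpleGraph.Walk.edges_append]
  conv_rhs => rw [gdist, ENNReal.iInf_add]
  exact le_iInf h2

/-- Edge-Lipschitz potential function. -/
def Lip (G : SimpleGraph V) (w : Sym2 V → ℝ≥0∞) (F : V → ℝ) : Prop :=
  ∀ u v, G.Adj u v → ENNReal.ofReal (F u) ≤ ENNReal.ofReal (F v) + w s(u, v)

lemma Lip.le_gdist {G : SimpleGraph V} {w : Sym2 V → ℝ≥0∞} {F : V → ℝ}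
    (hF : Lip G w F) (u v : V) :
    ENNReal.ofReal (F u) ≤ ENNReal.ofReal (F v) + gdist G w u v := by
  rw [gdist, ENNReal.add_iInf]
  refine le_iInf fun p => ?_
  induction p with
  | nil => simp [walkWeight]
  | @cons a b c h q ih =>
      calc ENNReal.ofReal (F a) ≤ ENNReal.ofReal (F b) + w s(a, b) := hF _ _ h
        _ ≤ (ENNReal.ofReal (F c) + walkWeight w q) + w s(a, b) := add_le_add_left ih _
        _ = ENNReal.ofReal (F c) + walkWeight w (SimpleGraph.Walk.cons h q) := by
            rw [walkWeight_cons]; ring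

lemma gdist_map_le {V' W' : Type} {G : SimpleGraph V'} {H : SimpleGraph W'}
    {w : Sym2 V' → ℝ≥0∞} {w' : Sym2 W' → ℝ≥0∞} (φ : V' → W') (ρ : ℝ≥0∞)
    (hρ0 : ρ ≠ 0) (hρt : ρ ≠ ⊤)
    (hφ : ∀ a b, G.Adj a b → H.Adj (φ a) (φ b))
    (hw : ∀ a b, G.Adj a b → w' s(φ a, φ b) = ρ * w s(a, b)) (u v : V') :
    gdist H w' (φ u) (φ v) ≤ ρ * gdist G w u v := by
  conv_rhs => rw [gdist, ENNReal.mul_iInf_of_ne hρ0 hρt]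
  refine le_iInf fun p => ?_
  induction p with
  | nil =>
      refine le_trans (gdist_self_le w' _) ?_
      simp [walkWeight]
  | @cons a b c h q ih =>
      calc gdist H w' (φ a) (φ c)
          ≤ gdist H w' (φ a) (φ b) + gdist H w' (φ b) (φ c) := ScatterDim.gdist_triangle w' _ _ _
        _ ≤ w' s(φ a, φ b) + ρ * walkWeight w q := add_le_add (gdist_edge w' (hφ _ _ h)) ih
        _ = ρ * walkWeight w (SimpleGraph.Walk.cons h q) := by
            rw [hw _ _ h, walkWeight_cons, mul_add]

lemma ofReal_lip {x y g : ℝ} (hy : 0 ≤ y) (hg : 0 ≤ g) (h : x ≤ y + g) :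
    ENNReal.ofReal x ≤ ENNReal.ofReal y + ENNReal.ofReal g := by
  rw [← ENNReal.ofReal_add hy hg]; exact ENNReal.ofReal_le_ofReal h

lemma lift_lip {γ α x y : ℝ} {W : ℝ≥0∞} (hγ : 0 ≤ γ) (hα : 0 ≤ α) (hx : 0 ≤ x) (hy : 0 ≤ y)
    (h : ENNReal.ofReal x ≤ ENNReal.ofReal y + W) :
    ENNReal.ofReal (γ + α * x) ≤ ENNReal.ofReal (γ + α * y) + ENNReal.ofReal α * W := by
  rw [ENNReal.ofReal_add hγ (mul_nonneg hα hx), ENNReal.ofReal_add hγ (mul_nonneg hα hy),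
    ENNReal.ofReal_mul hα, ENNReal.ofReal_mul hα]
  calc ENNReal.ofReal γ + ENNReal.ofReal α * ENNReal.ofReal x
      ≤ ENNReal.ofReal γ + ENNReal.ofReal α * (ENNReal.ofReal y + W) :=
        add_le_add_right (mul_le_mul_right h _) _
    _ = ENNReal.ofReal γ + ENNReal.ofReal α * ENNReal.ofReal y + ENNReal.ofReal α * W := by
        rw [mul_add, add_assoc]

lemma add_const_lip {d x y : ℝ} {W : ℝ≥0∞} (hd : 0 ≤ d) (hx : 0 ≤ x) (hy : 0 ≤ y)
    (h : ENNReal.ofReal x ≤ ENNReal.ofReal y + W) :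
    ENNReal.ofReal (d + x) ≤ ENNReal.ofReal (d + y) + W := by
  rw [ENNReal.ofReal_add hd hx, ENNReal.ofReal_add hd hy, add_assoc]
  exact add_le_add_right h _

/-- The inductive invariant: a ladder of length `ℓ` of matching edges, with the
cross upper bounds witnessed by the shortest-path metric and the lower bounds
witnessed by explicit Lipschitz potentials. -/
def Lad (Γ : GD) (ℓ : ℕ) (c : ℝ) : Prop :=
  ∃ (w : Sym2 Γ.V → ℝ≥0∞) (x p : ℕ → Γ.V),
    (∀ t, t < ℓ → (x t, p t) ∈ Γ.M ∨ (p t, x t) ∈ Γ.M) ∧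
    (∀ j i, j < i → i < ℓ → gdist Γ.G w (p j) (x i) ≤ 1) ∧
    (∃ F : Γ.V → ℝ, Lip Γ.G w F ∧ (∀ v, 0 ≤ F v ∧ F v ≤ 1) ∧
      (∀ j, j < ℓ → F (x j) = 0) ∧ (∀ i, i < ℓ → F (p i) = 1)) ∧
    (∀ t, t < ℓ → ∃ Gt : Γ.V → ℝ, Lip Γ.G w Gt ∧ (∀ v, 0 ≤ Gt v ∧ Gt v ≤ 1 + c) ∧
      (∀ j, j < ℓ → Gt (x j) = if j ≤ t then 0 else c) ∧
      (∀ i, i < ℓ → Gt (p i) = if i < t then 1 else 1 + c))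

/-- The base construction: in a graph with twins added on `L`, two distinct
vertices of `L` with a common neighbour give a ladder of length 2. -/
lemma base_lad {V' : Type} (G : SimpleGraph V') (L : Set V') (u v z : V')
    (hu : u ∈ L) (hv : v ∈ L) (huv : u ≠ v) (hzu : G.Adj z u) (hzv : G.Adj z v)
    (c : ℝ) (hc : 0 ≤ c) :
    Lad ⟨V' ⊕ ↥L, addTwins G L, twinM L⟩ 2 c := by
  classical
  have hzune : z ≠ u := hzu.ne
  have hzvne : z ≠ v := hzv.ne
  set e1 : Sym2 (V' ⊕ ↥L) := s(Sum.inl u, Sum.inl z) with he1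
  set e2 : Sym2 (V' ⊕ ↥L) := s(Sum.inl z, Sum.inr ⟨v, hv⟩) with he2
  have he21 : e2 ≠ e1 := by
    rw [he1, he2]
    simp [Sym2.eq_iff]
  set w : Sym2 (V' ⊕ ↥L) → ℝ≥0∞ := fun e =>
    if e = e1 then ENNReal.ofReal (1/2) else if e = e2 then ENNReal.ofReal (1/2) else ⊤ with hw
  have hwe1 : w e1 = ENNReal.ofReal (1/2) := by rw [hw]; simp
  have hwe2 : w e2 = ENNReal.ofReal (1/2) := by rw [hw]; simp [he21]
  -- the potential template
  set P : ℝ → ℝ → ℝ → ℝ → (V' ⊕ ↥L) → ℝ := fun a b cz d x =>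
    Sum.elim (fun y => if y = u then a else if y = v then b else if y = z then cz else 0)
      (fun y => if y = (⟨v, hv⟩ : ↥L) then d else 0) x with hP
  have hPu : ∀ a b cz d, P a b cz d (Sum.inl u) = a := by intro a b cz d; rw [hP]; simp
  have hPv : ∀ a b cz d, P a b cz d (Sum.inl v) = b := by
    intro a b cz d; rw [hP]; simp [Ne.symm huv]
  have hPz : ∀ a b cz d, P a b cz d (Sum.inl z) = cz := by
    intro a b cz d; rw [hP]; simp [hzune, hzvne]
  have hPu' : ∀ a b cz d, P a b cz d (Sum.inr ⟨u, hu⟩) = 0 := by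
    intro a b cz d; rw [hP]
    simp only [Sum.elim_inr]
    rw [if_neg]
    intro hh
    exact huv (congrArg Subtype.val hh)
  have hPv' : ∀ a b cz d, P a b cz d (Sum.inr ⟨v, hv⟩) = d := by
    intro a b cz d; rw [hP]; simp
  have hPbound : ∀ a b cz d x, 0 ≤ a → 0 ≤ b → 0 ≤ cz → 0 ≤ d →
      0 ≤ P a b cz d x := by
    intro a b cz d x ha hb hcz hd
    rw [hP]
    rcases x with y | y <;> simp only [Sum.elim_inl, Sum.elim_inr] <;> split_ifs <;>
      first | assumption | norm_num
  have hPbound' : ∀ a b cz d x (M : ℝ), a ≤ M → b ≤ M → cz ≤ M → d ≤ M → 0 ≤ M →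
      P a b cz d x ≤ M := by
    intro a b cz d x M ha hb hcz hd hM
    rw [hP]
    rcases x with y | y <;> simp only [Sum.elim_inl, Sum.elim_inr] <;> split_ifs <;>
      first | assumption | norm_num
  have hlipP : ∀ a b cz d : ℝ, 0 ≤ a → 0 ≤ b → 0 ≤ cz → 0 ≤ d →
      a ≤ cz + 1/2 → cz ≤ a + 1/2 → cz ≤ d + 1/2 → d ≤ cz + 1/2 →
      Lip (addTwins G L) w (P a b cz d) := by
    intro a b cz d ha hb hcz hd h1 h2 h3 h4 X Y hXY
    by_cases hx1 : s(X, Y) = e1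
    · have hwv : w s(X, Y) = ENNReal.ofReal (1/2) := by rw [hx1, hwe1]
      rw [hwv]
      rw [he1, Sym2.eq_iff] at hx1
      rcases hx1 with ⟨rfl, rfl⟩ | ⟨rfl, rfl⟩
      · rw [hPu, hPz]; exact ofReal_lip hcz (by norm_num) h1
      · rw [hPu, hPz]; exact ofReal_lip ha (by norm_num) h2
    · by_cases hx2 : s(X, Y) = e2
      · have hwv : w s(X, Y) = ENNReal.ofReal (1/2) := by rw [hx2, hwe2]
        rw [hwv]
        rw [he2, Sym2.eq_iff] at hx2
        rcases hx2 with ⟨rfl, rfl⟩ | ⟨rfl, rfl⟩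
        · rw [hPz, hPv']; exact ofReal_lip hd (by norm_num) h3
        · rw [hPz, hPv']; exact ofReal_lip hcz (by norm_num) h4
      · have hwv : w s(X, Y) = ⊤ := by rw [hw]; simp [hx1, hx2]
        rw [hwv, add_top]
        exact le_top
  set xf : ℕ → (V' ⊕ ↥L) := fun t => if t = 0 then Sum.inr ⟨u, hu⟩ else Sum.inr ⟨v, hv⟩ with hxf
  set pf : ℕ → (V' ⊕ ↥L) := fun t => if t = 0 then Sum.inl u else Sum.inl v with hpf
  have hxf0 : xf 0 = Sum.inr ⟨u, hu⟩ := by rw [hxf]; exact if_pos rfl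
  have hxfn : ∀ j : ℕ, j ≠ 0 → xf j = Sum.inr ⟨v, hv⟩ := by
    intro j hj; rw [hxf]; exact if_neg hj
  have hpf0 : pf 0 = Sum.inl u := by rw [hpf]; exact if_pos rfl
  have hpfn : ∀ j : ℕ, j ≠ 0 → pf j = Sum.inl v := by
    intro j hj; rw [hpf]; exact if_neg hj
  refine ⟨w, xf, pf, ?_, ?_, ?_, ?_⟩
  · intro t ht
    by_cases h0 : t = 0
    · subst h0; rw [hxf0, hpf0]; right; exact ⟨⟨u, hu⟩, rfl⟩
    · rw [hxfn t h0, hpfn t h0]; right; exact ⟨⟨v, hv⟩, rfl⟩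
  · intro j i hji hi
    have hj0 : j = 0 := by omega
    have hi1 : i = 1 := by omega
    subst hj0; subst hi1
    rw [hpf0, hxfn 1 one_ne_zero]
    have hadj1 : (addTwins G L).Adj (Sum.inl u) (Sum.inl z) := hzu.symm
    have hadj2 : (addTwins G L).Adj (Sum.inl z) (Sum.inr ⟨v, hv⟩) := Or.inr hzv
    refine le_trans (gdist_le_walk w
      (SimpleGraph.Walk.cons hadj1 (SimpleGraph.Walk.cons hadj2 SimpleGraph.Walk.nil))) ?_
    rw [walkWeight_cons, walkWeight_cons, walkWeight_nil, add_zero, ← he1, ← he2, hwe1, hwe2,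
      ← ENNReal.ofReal_add (by norm_num) (by norm_num)]
    norm_num
  · refine ⟨P 1 1 (1/2) 0, hlipP 1 1 (1/2) 0 (by norm_num) (by norm_num) (by norm_num)
      (by norm_num) (by norm_num) (by norm_num) (by norm_num) (by norm_num), ?_, ?_, ?_⟩
    · intro x
      exact ⟨hPbound _ _ _ _ _ (by norm_num) (by norm_num) (by norm_num) (by norm_num),
        hPbound' _ _ _ _ _ _ (by norm_num) (by norm_num) (by norm_num) (by norm_num) (by norm_num)⟩
    · intro j hj
      by_cases h0 : j = 0
      · subst h0; rw [hxf0]; exact hPu' _ _ _ _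
      · rw [hxfn j h0]; exact hPv' _ _ _ _
    · intro i hi
      by_cases h0 : i = 0
      · subst h0; rw [hpf0]; exact hPu _ _ _ _
      · rw [hpfn i h0]; exact hPv _ _ _ _
  · intro t ht
    by_cases ht0 : t = 0
    · subst ht0
      refine ⟨P (1+c) (1+c) (1/2+c) c, hlipP _ _ _ _ (by linarith) (by linarith) (by linarith)
        (by linarith) (by linarith) (by linarith) (by linarith) (by linarith), ?_, ?_, ?_⟩
      · intro x
        exact ⟨hPbound _ _ _ _ _ (by linarith) (by linarith) (by linarith) (by linarith),
          hPbound' _ _ _ _ _ _ (by linarith) (by linarith) (by linarith) (by linarith) (by linarith)⟩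
      · intro j hj
        by_cases h0 : j = 0
        · subst h0
          rw [if_pos (le_refl 0), hxf0]
          exact hPu' _ _ _ _
        · rw [if_neg (by omega : ¬ j ≤ 0), hxfn j h0]
          exact hPv' _ _ _ _
      · intro i hi
        rw [if_neg (by omega : ¬ i < 0)]
        by_cases h0 : i = 0
        · subst h0; rw [hpf0]; exact hPu _ _ _ _
        · rw [hpfn i h0]; exact hPv _ _ _ _
    · have ht1 : t = 1 := by omega
      subst ht1
      refine ⟨P 1 (1+c) (1/2) 0, hlipP _ _ _ _ (by norm_num) (by linarith) (by norm_num)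
        (by norm_num) (by norm_num) (by norm_num) (by norm_num) (by norm_num), ?_, ?_, ?_⟩
      · intro x
        exact ⟨hPbound _ _ _ _ _ (by norm_num) (by linarith) (by norm_num) (by norm_num),
          hPbound' _ _ _ _ _ _ (by linarith) (by linarith) (by linarith) (by linarith) (by linarith)⟩
      · intro j hj
        have hj1 : j ≤ 1 := by omega
        rw [if_pos hj1]
        by_cases h0 : j = 0
        · subst h0; rw [hxf0]; exact hPu' _ _ _ _
        · rw [hxfn j h0]; exact hPv' _ _ _ _
      · intro i hi
        by_cases h0 : i = 0
        · subst h0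
          rw [if_pos (by omega : (0:ℕ) < 1), hpf0]
          exact hPu _ _ _ _
        · have hi1 : i = 1 := by omega
          subst hi1
          rw [if_neg (by omega : ¬ (1:ℕ) < 1), hpfn 1 one_ne_zero]
          exact hPv _ _ _ _


/-- The inductive step of the ladder construction. -/
lemma step_lad (A B : GD) (ℓA ℓB : ℕ) (c c' : ℝ) (hc : 0 < c) (hc' : 0 < c')
    (hrel : (1 - c') * c = c') (hA : Lad A ℓA c) (hB : Lad B ℓB c') :
    Lad (stepGD 2 A B) (ℓA * ℓB) c' := by
  classical
  obtain ⟨wA, xA, pA, hMA, hAA, ⟨FA, hFAl, hFAb, hFAx, hFAp⟩, hGA⟩ := hA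
  obtain ⟨wB, xB, pB, hMB, hAB, ⟨FB, hFBl, hFBb, hFBx, hFBp⟩, hGB⟩ := hB
  set γ : ℝ := c' / 2 with hγdef
  set α : ℝ := 1 - c' with hαdef
  have hc1 : c' < 1 := by nlinarith
  have hα0 : 0 < α := by rw [hαdef]; linarith
  have hγ0 : 0 < γ := by rw [hγdef]; linarith
  have hαc : α * c = c' := by rw [hαdef]; exact hrel
  have hγγ : γ + γ = c' := by rw [hγdef]; ring
  have hsum : γ + α + γ = 1 := by rw [hγdef, hαdef]; ring
  have hexp : α * (1 + c) = α + c' := by rw [mul_add, mul_one, hαc]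
  -- index arithmetic
  have hBpos : ∀ n, n < ℓA * ℓB → 0 < ℓB := by
    intro n hn
    rcases Nat.eq_zero_or_pos ℓB with h | h
    · subst h; simp at hn
    · exact h
  have hdivlt : ∀ n, n < ℓA * ℓB → n / ℓB < ℓA := by
    intro n hn; exact Nat.div_lt_of_lt_mul (by rwa [mul_comm] at hn)
  have hmodlt : ∀ n, n < ℓA * ℓB → n % ℓB < ℓB := fun n hn => Nat.mod_lt _ (hBpos n hn)
  have hdiv_lt_of : ∀ m n : ℕ, m / ℓB < n / ℓB → m < n := by
    intro m n h
    by_contra hcon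
    push_neg at hcon
    have h2 : n / ℓB ≤ m / ℓB := Nat.div_le_div_right hcon
    omega
  have hmod_lt_of : ∀ m n : ℕ, m / ℓB = n / ℓB → m < n → m % ℓB < n % ℓB := by
    intro m n h hmn
    by_contra hcon
    push_neg at hcon
    have h1 : n ≤ m := by
      calc n = ℓB * (n / ℓB) + n % ℓB := (Nat.div_add_mod n ℓB).symm
        _ ≤ ℓB * (m / ℓB) + m % ℓB := by rw [h]; exact Nat.add_le_add_left hcon _
        _ = m := Nat.div_add_mod m ℓB
    omega
  have hlt_iff : ∀ m n : ℕ, m / ℓB = n / ℓB → (m < n ↔ m % ℓB < n % ℓB) := by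
    intro m n h
    constructor
    · exact hmod_lt_of m n h
    · intro hmm
      rcases lt_trichotomy m n with h2 | h2 | h2
      · exact h2
      · exfalso; subst h2; omega
      · exfalso; have := hmod_lt_of n m h.symm h2; omega
  have hle_iff : ∀ m n : ℕ, m / ℓB = n / ℓB → (m ≤ n ↔ m % ℓB ≤ n % ℓB) := by
    intro m n h
    constructor
    · intro hmm
      rcases Nat.eq_or_lt_of_le hmm with h2 | h2
      · subst h2; exact le_refl _
      · exact (hmod_lt_of m n h h2).le
    · intro hmm
      by_contra hcon
      push_neg at hcon
      have := hmod_lt_of n m h.symm hcon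
      omega
  -- distinctness of the ladder points of A
  have hxpA : ∀ j i, j < ℓA → i < ℓA → xA j ≠ pA i := by
    intro j i hj hi he
    have h0 := hFAx j hj
    rw [he, hFAp i hi] at h0
    norm_num at h0
  have hpAinj : ∀ t tb, t < ℓA → tb < ℓA → pA t = pA tb → t = tb := by
    intro t tb ht htb he
    rcases lt_trichotomy t tb with h | h | h
    · exfalso
      obtain ⟨Gt, _, _, _, hGp⟩ := hGA tb htb
      have e1 := hGp t ht
      have e2 := hGp tb htb
      rw [if_pos h] at e1
      rw [if_neg (lt_irrefl tb)] at e2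
      rw [he, e2] at e1
      linarith
    · exact h
    · exfalso
      obtain ⟨Gt, _, _, _, hGp⟩ := hGA t ht
      have e1 := hGp tb htb
      have e2 := hGp t ht
      rw [if_pos h] at e1
      rw [if_neg (lt_irrefl t)] at e2
      rw [← he, e2] at e1
      linarith
  have hxAinj : ∀ t tb, t < ℓA → tb < ℓA → xA t = xA tb → t = tb := by
    intro t tb ht htb he
    rcases lt_trichotomy t tb with h | h | h
    · exfalso
      obtain ⟨Gt, _, _, hGx, _⟩ := hGA t ht
      have e1 := hGx t ht
      have e2 := hGx tb htb
      rw [if_pos (le_refl t)] at e1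
      rw [if_neg (by omega : ¬ tb ≤ t)] at e2
      rw [he, e2] at e1
      linarith
    · exact h
    · exfalso
      obtain ⟨Gt, _, _, hGx, _⟩ := hGA tb htb
      have e1 := hGx tb htb
      have e2 := hGx t ht
      rw [if_pos (le_refl tb)] at e1
      rw [if_neg (by omega : ¬ t ≤ tb)] at e2
      rw [← he, e2] at e1
      linarith
  -- the matching edges used by the ladder of A
  obtain ⟨E, hEcases, hEmem⟩ : ∃ E : ℕ → A.V × A.V,
      (∀ t, E t = (xA t, pA t) ∨ E t = (pA t, xA t)) ∧ (∀ t, t < ℓA → E t ∈ A.M) := by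
    refine ⟨fun t => if (xA t, pA t) ∈ A.M then (xA t, pA t) else (pA t, xA t), ?_, ?_⟩
    · intro t
      by_cases h : (xA t, pA t) ∈ A.M
      · left; exact if_pos h
      · right; exact if_neg h
    · intro t ht
      by_cases h : (xA t, pA t) ∈ A.M
      · rw [show (fun t => if (xA t, pA t) ∈ A.M then (xA t, pA t) else (pA t, xA t)) t
            = (xA t, pA t) from if_pos h]
        exact h
      · rw [show (fun t => if (xA t, pA t) ∈ A.M then (xA t, pA t) else (pA t, xA t)) t
            = (pA t, xA t) from if_neg h]
        rcases hMA t ht with hm | hm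
        · exact absurd hm h
        · exact hm
  have hEinj : ∀ t tb, t < ℓA → tb < ℓA → E t = E tb → t = tb := by
    intro t tb ht htb he
    rcases hEcases t with h1 | h1 <;> rcases hEcases tb with h2 | h2 <;>
      rw [h1, h2, Prod.mk.injEq] at he
    · exact hpAinj t tb ht htb he.2
    · exact absurd he.1 (hxpA t tb ht htb)
    · exact absurd he.2 (hxpA t tb ht htb)
    · exact hpAinj t tb ht htb he.1
  have hpEnd : ∀ t, pA t = (E t).1 ∨ pA t = (E t).2 := by
    intro t
    rcases hEcases t with h | h <;> rw [h]
    · right; rfl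
    · left; rfl
  have hxEnd : ∀ t, xA t = (E t).1 ∨ xA t = (E t).2 := by
    intro t
    rcases hEcases t with h | h <;> rw [h]
    · left; rfl
    · right; rfl
  obtain ⟨tI, htI⟩ : ∃ tI : A.V × A.V → ℕ, ∀ t, t < ℓA → tI (E t) = t := by
    refine ⟨fun e => if h : ∃ t, t < ℓA ∧ e = E t then h.choose else 0, ?_⟩
    intro t ht
    have hex : ∃ tb, tb < ℓA ∧ E t = E tb := ⟨t, ht, rfl⟩
    rw [show (fun e => if h : ∃ t, t < ℓA ∧ e = E t then h.choose else 0) (E t)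
        = hex.choose from dif_pos hex]
    exact hEinj _ _ hex.choose_spec.1 ht hex.choose_spec.2.symm
  -- connection weights
  obtain ⟨J, hJγ, hJtop⟩ : ∃ J : A.V → (A.V × A.V) → Fin 2 → B.V → ℝ≥0∞,
      (∀ a e i q, (i = 0 ∧ ∃ t, t < ℓA ∧ e = E t ∧
          ((a = xA t ∧ ∃ s, s < ℓB ∧ q = xB s) ∨ (a = pA t ∧ ∃ s, s < ℓB ∧ q = pB s))) →
        J a e i q = ENNReal.ofReal γ) ∧
      (∀ a e i q, ¬ (i = 0 ∧ ∃ t, t < ℓA ∧ e = E t ∧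
          ((a = xA t ∧ ∃ s, s < ℓB ∧ q = xB s) ∨ (a = pA t ∧ ∃ s, s < ℓB ∧ q = pB s))) →
        J a e i q = ⊤) := by
    refine ⟨fun a e i q => if (i = 0 ∧ ∃ t, t < ℓA ∧ e = E t ∧
        ((a = xA t ∧ ∃ s, s < ℓB ∧ q = xB s) ∨ (a = pA t ∧ ∃ s, s < ℓB ∧ q = pB s)))
      then ENNReal.ofReal γ else ⊤, ?_, ?_⟩ <;> intro a e i q h
    · exact if_pos h
    · exact if_neg h
  -- the weight function of the new graph
  obtain ⟨wN, hwinl, hwjoin, hwjoinb, hwcopy, hwdead⟩ :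
      ∃ wN : Sym2 (stepGD 2 A B).V → ℝ≥0∞,
      (∀ a b : A.V, wN s(Sum.inl a, Sum.inl b) = ENNReal.ofReal α * wA s(a, b)) ∧
      (∀ (a : A.V) (e : ↥A.M) (i : Fin 2) (q : B.V),
        wN s(Sum.inl a, Sum.inr (e, i, q)) = J a e.1 i q) ∧
      (∀ (a : A.V) (e : ↥A.M) (i : Fin 2) (q : B.V),
        wN s(Sum.inr (e, i, q), Sum.inl a) = J a e.1 i q) ∧
      (∀ (e eb : ↥A.M) (i ib : Fin 2) (q qb : B.V), e = eb → i = ib →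
        wN s(Sum.inr (e, i, q), Sum.inr (eb, ib, qb)) = wB s(q, qb)) ∧
      (∀ (e eb : ↥A.M) (i ib : Fin 2) (q qb : B.V), ¬ (e.1 = eb.1 ∧ i = ib) →
        wN s(Sum.inr (e, i, q), Sum.inr (eb, ib, qb)) = ⊤) := by
    refine ⟨Sym2.lift ⟨fun X Y =>
      Sum.elim (fun a => Sum.elim (fun b => ENNReal.ofReal α * wA s(a, b))
          (fun qq => J a qq.1.1 qq.2.1 qq.2.2) Y)
        (fun qq => Sum.elim (fun a => J a qq.1.1 qq.2.1 qq.2.2)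
          (fun qqb => if qq.1.1 = qqb.1.1 ∧ qq.2.1 = qqb.2.1 then wB s(qq.2.2, qqb.2.2) else ⊤) Y)
        X, ?_⟩, ?_, ?_, ?_, ?_, ?_⟩
    · rintro (a | qq) (b | qqb) <;> simp only [Sum.elim_inl, Sum.elim_inr]
      · rw [Sym2.eq_swap]
      · by_cases h : qq.1.1 = qqb.1.1 ∧ qq.2.1 = qqb.2.1
        · rw [if_pos h, if_pos ⟨h.1.symm, h.2.symm⟩, Sym2.eq_swap]
        · rw [if_neg h, if_neg (fun hb => h ⟨hb.1.symm, hb.2.symm⟩)]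
    · intro a b
      erw [Sym2.lift_mk]
      rfl
    · intro a e i q
      erw [Sym2.lift_mk]
      rfl
    · intro a e i q
      erw [Sym2.lift_mk]
      rfl
    · intro e eb i ib q qb he hi
      subst he; subst hi
      erw [Sym2.lift_mk]
      simp only [Sum.elim_inr]
      simp
    · intro e eb i ib q qb h
      erw [Sym2.lift_mk]
      simp only [Sum.elim_inr]
      exact if_neg h
  -- the new ladder points
  obtain ⟨xN, pN, hxNval, hpNval⟩ : ∃ xN pN : ℕ → (stepGD 2 A B).V,
      (∀ n (hn : n < ℓA * ℓB), xN n =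
        Sum.inr (⟨E (n / ℓB), hEmem _ (hdivlt n hn)⟩, (0 : Fin 2), xB (n % ℓB))) ∧
      (∀ n (hn : n < ℓA * ℓB), pN n =
        Sum.inr (⟨E (n / ℓB), hEmem _ (hdivlt n hn)⟩, (0 : Fin 2), pB (n % ℓB))) := by
    refine ⟨fun n => if hn : n < ℓA * ℓB then
        Sum.inr (⟨E (n / ℓB), hEmem _ (hdivlt n hn)⟩, (0 : Fin 2), xB (n % ℓB))
      else Sum.inl (xA 0),
      fun n => if hn : n < ℓA * ℓB then
        Sum.inr (⟨E (n / ℓB), hEmem _ (hdivlt n hn)⟩, (0 : Fin 2), pB (n % ℓB))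
      else Sum.inl (xA 0), ?_, ?_⟩ <;> intro n hn <;> exact dif_pos hn
  refine ⟨wN, xN, pN, ?_, ?_, ?_, ?_⟩
  · -- matching membership
    intro n hn
    rw [hxNval n hn, hpNval n hn]
    rcases hMB (n % ℓB) (hmodlt n hn) with h | h
    · left
      exact ⟨⟨E (n / ℓB), hEmem _ (hdivlt n hn)⟩, 0, xB (n % ℓB), pB (n % ℓB), h, rfl⟩
    · right
      exact ⟨⟨E (n / ℓB), hEmem _ (hdivlt n hn)⟩, 0, pB (n % ℓB), xB (n % ℓB), h, rfl⟩
  · -- the upper bounds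
    intro j i hji hi
    have hj : j < ℓA * ℓB := lt_trans hji hi
    rw [hpNval j hj, hxNval i hi]
    rcases Nat.lt_or_ge (j / ℓB) (i / ℓB) with hlt | hge
    · -- distinct copies
      have hstep1 : gdist (stepGD 2 A B).G wN
          (Sum.inr (⟨E (j / ℓB), hEmem _ (hdivlt j hj)⟩, (0 : Fin 2), pB (j % ℓB)))
          (Sum.inl (pA (j / ℓB))) ≤ ENNReal.ofReal γ := by
        refine le_trans (gdist_edge wN ?_) ?_
        · exact hpEnd (j / ℓB)
        · rw [hwjoinb]
          rw [hJγ _ _ _ _ ⟨rfl, j / ℓB, hdivlt j hj, rfl,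
            Or.inr ⟨rfl, j % ℓB, hmodlt j hj, rfl⟩⟩]
      have hstep2 : gdist (stepGD 2 A B).G wN (Sum.inl (pA (j / ℓB)))
          (Sum.inl (xA (i / ℓB))) ≤ ENNReal.ofReal α := by
        refine le_trans (gdist_map_le (G := A.G) (H := (stepGD 2 A B).G) Sum.inl
          (ENNReal.ofReal α) (ENNReal.ofReal_pos.mpr hα0).ne' ENNReal.ofReal_ne_top
          (fun a b hab => hab) (fun a b _ => hwinl a b) (pA (j / ℓB)) (xA (i / ℓB))) ?_
        calc ENNReal.ofReal α * gdist A.G wA (pA (j / ℓB)) (xA (i / ℓB))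
            ≤ ENNReal.ofReal α * 1 := mul_le_mul_right (hAA _ _ hlt (hdivlt i hi)) _
          _ = ENNReal.ofReal α := mul_one _
      have hstep3 : gdist (stepGD 2 A B).G wN (Sum.inl (xA (i / ℓB)))
          (Sum.inr (⟨E (i / ℓB), hEmem _ (hdivlt i hi)⟩, (0 : Fin 2), xB (i % ℓB)))
          ≤ ENNReal.ofReal γ := by
        refine le_trans (gdist_edge wN ?_) ?_
        · exact hxEnd (i / ℓB)
        · rw [hwjoin]
          rw [hJγ _ _ _ _ ⟨rfl, i / ℓB, hdivlt i hi, rfl,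
            Or.inl ⟨rfl, i % ℓB, hmodlt i hi, rfl⟩⟩]
      calc gdist (stepGD 2 A B).G wN _ _
          ≤ gdist (stepGD 2 A B).G wN _ (Sum.inl (pA (j / ℓB)))
            + gdist (stepGD 2 A B).G wN (Sum.inl (pA (j / ℓB))) _ :=
            ScatterDim.gdist_triangle wN _ _ _
        _ ≤ ENNReal.ofReal γ + (gdist (stepGD 2 A B).G wN (Sum.inl (pA (j / ℓB)))
              (Sum.inl (xA (i / ℓB)))
            + gdist (stepGD 2 A B).G wN (Sum.inl (xA (i / ℓB))) _) :=
            add_le_add hstep1 (ScatterDim.gdist_triangle wN _ _ _)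
        _ ≤ ENNReal.ofReal γ + (ENNReal.ofReal α + ENNReal.ofReal γ) :=
            add_le_add_right (add_le_add hstep2 hstep3) _
        _ = 1 := by
            rw [← ENNReal.ofReal_add hα0.le hγ0.le,
              ← ENNReal.ofReal_add hγ0.le (by linarith), ← ENNReal.ofReal_one]
            congr 1
            linarith
    · -- same copy
      have heq : j / ℓB = i / ℓB := le_antisymm (Nat.div_le_div_right hji.le) hge
      have hslt : j % ℓB < i % ℓB := hmod_lt_of j i heq hji
      have hsub : (⟨E (j / ℓB), hEmem _ (hdivlt j hj)⟩ : ↥A.M)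
          = ⟨E (i / ℓB), hEmem _ (hdivlt i hi)⟩ :=
        Subtype.ext (show E (j / ℓB) = E (i / ℓB) from by rw [heq])
      rw [hsub]
      refine le_trans (gdist_map_le (G := B.G) (H := (stepGD 2 A B).G)
        (fun q => Sum.inr (⟨E (i / ℓB), hEmem _ (hdivlt i hi)⟩, (0 : Fin 2), q)) 1
        one_ne_zero ENNReal.one_ne_top (fun a b hab => ⟨rfl, rfl, hab⟩)
        (fun a b _ => by rw [hwcopy _ _ _ _ _ _ rfl rfl, one_mul])
        (pB (j % ℓB)) (xB (i % ℓB))) ?_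
      rw [one_mul]
      exact hAB _ _ hslt (hmodlt i hi)
  · -- the global potential F
    obtain ⟨FN, hFNinl, hFNlive, hFNdead⟩ : ∃ FN : (stepGD 2 A B).V → ℝ,
        (∀ a : A.V, FN (Sum.inl a) = γ + α * FA a) ∧
        (∀ (e : ↥A.M) (i : Fin 2) (q : B.V), (i = 0 ∧ ∃ t, t < ℓA ∧ e.1 = E t) →
          FN (Sum.inr (e, i, q)) = FB q) ∧
        (∀ (e : ↥A.M) (i : Fin 2) (q : B.V), ¬ (i = 0 ∧ ∃ t, t < ℓA ∧ e.1 = E t) →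
          FN (Sum.inr (e, i, q)) = 0) := by
      refine ⟨Sum.elim (fun a => γ + α * FA a)
        (fun qq => if (qq.2.1 = 0 ∧ ∃ t, t < ℓA ∧ qq.1.1 = E t) then FB qq.2.2 else 0),
        fun a => rfl, ?_, ?_⟩ <;> intro e i q h
      · exact if_pos h
      · exact if_neg h
    refine ⟨FN, ?_, ?_, ?_, ?_⟩
    · -- Lipschitz
      rintro (a | ⟨e, i, q⟩) (b | ⟨eb, ib, qb⟩) hadj
      · rw [hwinl, hFNinl, hFNinl]
        exact lift_lip hγ0.le hα0.le (hFAb a).1 (hFAb b).1 (hFAl a b hadj)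
      · rw [hwjoin, hFNinl]
        by_cases hJc : ((ib : Fin 2) = 0 ∧ ∃ t, t < ℓA ∧ (eb : ↥A.M).1 = E t ∧
            ((a = xA t ∧ ∃ s, s < ℓB ∧ qb = xB s) ∨ (a = pA t ∧ ∃ s, s < ℓB ∧ qb = pB s)))
        · obtain ⟨hi0, t, ht, het, hcase⟩ := hJc
          rw [hJγ _ _ _ _ ⟨hi0, t, ht, het, hcase⟩,
            hFNlive _ _ _ ⟨hi0, t, ht, het⟩]
          rcases hcase with ⟨rfl, s, hs, rfl⟩ | ⟨rfl, s, hs, rfl⟩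
          · rw [hFAx t ht, hFBx s hs]
            exact ofReal_lip (le_refl 0) hγ0.le (by linarith)
          · rw [hFAp t ht, hFBp s hs]
            exact ofReal_lip (by norm_num) hγ0.le (by linarith)
        · rw [hJtop _ _ _ _ hJc, add_top]
          exact le_top
      · rw [hwjoinb, hFNinl]
        by_cases hJc : ((i : Fin 2) = 0 ∧ ∃ t, t < ℓA ∧ (e : ↥A.M).1 = E t ∧
            ((b = xA t ∧ ∃ s, s < ℓB ∧ q = xB s) ∨ (b = pA t ∧ ∃ s, s < ℓB ∧ q = pB s)))
        · obtain ⟨hi0, t, ht, het, hcase⟩ := hJc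
          rw [hJγ _ _ _ _ ⟨hi0, t, ht, het, hcase⟩,
            hFNlive _ _ _ ⟨hi0, t, ht, het⟩]
          rcases hcase with ⟨rfl, s, hs, rfl⟩ | ⟨rfl, s, hs, rfl⟩
          · rw [hFAx t ht, hFBx s hs]
            exact ofReal_lip (by linarith) hγ0.le (by linarith)
          · rw [hFAp t ht, hFBp s hs]
            exact ofReal_lip (by linarith) hγ0.le (by linarith)
        · rw [hJtop _ _ _ _ hJc, add_top]
          exact le_top
      · obtain ⟨h1, h2, h3⟩ := hadj
        have heb : e = eb := h1
        have hib : i = ib := h2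
        subst heb; subst hib
        rw [hwcopy e e i i q qb rfl rfl]
        by_cases hlive : ((i : Fin 2) = 0 ∧ ∃ t, t < ℓA ∧ (e : ↥A.M).1 = E t)
        · rw [hFNlive _ _ _ hlive, hFNlive _ _ _ hlive]
          exact hFBl q qb h3
        · rw [hFNdead _ _ _ hlive, hFNdead _ _ _ hlive]
          simp only [ENNReal.ofReal_zero, zero_add]
          exact zero_le
    · -- bounds
      rintro (a | ⟨e, i, q⟩)
      · rw [hFNinl]
        have h1 := (hFAb a).1
        have h2 := (hFAb a).2
        constructor
        · nlinarith
        · nlinarith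
      · by_cases hlive : ((i : Fin 2) = 0 ∧ ∃ t, t < ℓA ∧ (e : ↥A.M).1 = E t)
        · rw [hFNlive _ _ _ hlive]
          exact hFBb q
        · rw [hFNdead _ _ _ hlive]
          norm_num
    · intro m hm
      rw [hxNval m hm, hFNlive _ _ _ ⟨rfl, m / ℓB, hdivlt m hm, rfl⟩]
      exact hFBx _ (hmodlt m hm)
    · intro m hm
      rw [hpNval m hm, hFNlive _ _ _ ⟨rfl, m / ℓB, hdivlt m hm, rfl⟩]
      exact hFBp _ (hmodlt m hm)
  · -- the pair potentials
    intro n hn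
    obtain ⟨GA, hGAl, hGAb, hGAx, hGAp⟩ := hGA (n / ℓB) (hdivlt n hn)
    obtain ⟨GB, hGBl, hGBb, hGBx, hGBp⟩ := hGB (n % ℓB) (hmodlt n hn)
    obtain ⟨GN, hGNinl, hGNlt, hGNeq, hGNgt, hGNdead⟩ : ∃ GN : (stepGD 2 A B).V → ℝ,
        (∀ a : A.V, GN (Sum.inl a) = γ + α * GA a) ∧
        (∀ (e : ↥A.M) (i : Fin 2) (q : B.V), (i = 0 ∧ ∃ t, t < ℓA ∧ e.1 = E t) →
          tI e.1 < n / ℓB → GN (Sum.inr (e, i, q)) = FB q) ∧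
        (∀ (e : ↥A.M) (i : Fin 2) (q : B.V), (i = 0 ∧ ∃ t, t < ℓA ∧ e.1 = E t) →
          tI e.1 = n / ℓB → GN (Sum.inr (e, i, q)) = GB q) ∧
        (∀ (e : ↥A.M) (i : Fin 2) (q : B.V), (i = 0 ∧ ∃ t, t < ℓA ∧ e.1 = E t) →
          n / ℓB < tI e.1 → GN (Sum.inr (e, i, q)) = c' + FB q) ∧
        (∀ (e : ↥A.M) (i : Fin 2) (q : B.V), ¬ (i = 0 ∧ ∃ t, t < ℓA ∧ e.1 = E t) →
          GN (Sum.inr (e, i, q)) = 0) := by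
      refine ⟨Sum.elim (fun a => γ + α * GA a)
        (fun qq => if (qq.2.1 = 0 ∧ ∃ t, t < ℓA ∧ qq.1.1 = E t) then
          (if tI qq.1.1 < n / ℓB then FB qq.2.2 else if tI qq.1.1 = n / ℓB then GB qq.2.2
            else c' + FB qq.2.2) else 0),
        fun a => rfl, ?_, ?_, ?_, ?_⟩
      · intro e i q hlive hcmp
        simp only [Sum.elim_inr]
        rw [if_pos hlive, if_pos hcmp]
      · intro e i q hlive hcmp
        simp only [Sum.elim_inr]
        rw [if_pos hlive, if_neg (by omega : ¬ tI (e : ↥A.M).1 < n / ℓB), if_pos hcmp]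
      · intro e i q hlive hcmp
        simp only [Sum.elim_inr]
        rw [if_pos hlive, if_neg (by omega : ¬ tI (e : ↥A.M).1 < n / ℓB),
          if_neg (by omega : ¬ tI (e : ↥A.M).1 = n / ℓB)]
      · intro e i q hlive
        simp only [Sum.elim_inr]
        rw [if_neg hlive]
    refine ⟨GN, ?_, ?_, ?_, ?_⟩
    · -- Lipschitz
      rintro (a | ⟨e, i, q⟩) (b | ⟨eb, ib, qb⟩) hadj
      · rw [hwinl, hGNinl, hGNinl]
        exact lift_lip hγ0.le hα0.le (hGAb a).1 (hGAb b).1 (hGAl a b hadj)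
      · -- inl a / inr (eb, ib, qb)
        rw [hwjoin, hGNinl]
        by_cases hJc : ((ib : Fin 2) = 0 ∧ ∃ t, t < ℓA ∧ (eb : ↥A.M).1 = E t ∧
            ((a = xA t ∧ ∃ s, s < ℓB ∧ qb = xB s) ∨ (a = pA t ∧ ∃ s, s < ℓB ∧ qb = pB s)))
        · obtain ⟨hi0, t, ht, het, hcase⟩ := hJc
          rw [hJγ _ _ _ _ ⟨hi0, t, ht, het, hcase⟩]
          have hlive : ((ib : Fin 2) = 0 ∧ ∃ tb, tb < ℓA ∧ (eb : ↥A.M).1 = E tb) :=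
            ⟨hi0, t, ht, het⟩
          have htIe : tI (eb : ↥A.M).1 = t := by rw [het, htI t ht]
          rcases hcase with ⟨rfl, s, hs, rfl⟩ | ⟨rfl, s, hs, rfl⟩
          · rw [hGAx t ht]
            rcases lt_trichotomy t (n / ℓB) with hcmp | hcmp | hcmp
            · rw [hGNlt _ _ _ hlive (by rw [htIe]; exact hcmp), hFBx s hs,
                if_pos (le_of_lt hcmp)]
              exact ofReal_lip (le_refl 0) hγ0.le (by linarith)
            · rw [hGNeq _ _ _ hlive (by rw [htIe]; exact hcmp), hGBx s hs,
                if_pos (le_of_eq hcmp)]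
              by_cases hss : s ≤ n % ℓB
              · rw [if_pos hss]
                exact ofReal_lip (le_refl 0) hγ0.le (by linarith)
              · rw [if_neg hss]
                exact ofReal_lip hc'.le hγ0.le (by linarith)
            · rw [hGNgt _ _ _ hlive (by rw [htIe]; exact hcmp), hFBx s hs,
                if_neg (by omega : ¬ t ≤ n / ℓB)]
              exact ofReal_lip (by linarith) hγ0.le (by linarith)
          · rw [hGAp t ht]
            rcases lt_trichotomy t (n / ℓB) with hcmp | hcmp | hcmp
            · rw [hGNlt _ _ _ hlive (by rw [htIe]; exact hcmp), hFBp s hs, if_pos hcmp]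
              exact ofReal_lip (by norm_num) hγ0.le (by linarith)
            · rw [hGNeq _ _ _ hlive (by rw [htIe]; exact hcmp), hGBp s hs,
                if_neg (by omega : ¬ t < n / ℓB)]
              by_cases hss : s < n % ℓB
              · rw [if_pos hss]
                exact ofReal_lip (by norm_num) hγ0.le (by linarith)
              · rw [if_neg hss]
                exact ofReal_lip (by linarith) hγ0.le (by linarith)
            · rw [hGNgt _ _ _ hlive (by rw [htIe]; exact hcmp), hFBp s hs,
                if_neg (by omega : ¬ t < n / ℓB)]
              exact ofReal_lip (by linarith) hγ0.le (by linarith)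
        · rw [hJtop _ _ _ _ hJc, add_top]
          exact le_top
      · -- inr (e, i, q) / inl b
        rw [hwjoinb, hGNinl]
        by_cases hJc : ((i : Fin 2) = 0 ∧ ∃ t, t < ℓA ∧ (e : ↥A.M).1 = E t ∧
            ((b = xA t ∧ ∃ s, s < ℓB ∧ q = xB s) ∨ (b = pA t ∧ ∃ s, s < ℓB ∧ q = pB s)))
        · obtain ⟨hi0, t, ht, het, hcase⟩ := hJc
          rw [hJγ _ _ _ _ ⟨hi0, t, ht, het, hcase⟩]
          have hlive : ((i : Fin 2) = 0 ∧ ∃ tb, tb < ℓA ∧ (e : ↥A.M).1 = E tb) :=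
            ⟨hi0, t, ht, het⟩
          have htIe : tI (e : ↥A.M).1 = t := by rw [het, htI t ht]
          rcases hcase with ⟨rfl, s, hs, rfl⟩ | ⟨rfl, s, hs, rfl⟩
          · rw [hGAx t ht]
            rcases lt_trichotomy t (n / ℓB) with hcmp | hcmp | hcmp
            · rw [hGNlt _ _ _ hlive (by rw [htIe]; exact hcmp), hFBx s hs,
                if_pos (le_of_lt hcmp)]
              exact ofReal_lip (by linarith) hγ0.le (by linarith)
            · rw [hGNeq _ _ _ hlive (by rw [htIe]; exact hcmp), hGBx s hs,
                if_pos (le_of_eq hcmp)]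
              by_cases hss : s ≤ n % ℓB
              · rw [if_pos hss]
                exact ofReal_lip (by linarith) hγ0.le (by linarith)
              · rw [if_neg hss]
                exact ofReal_lip (by linarith) hγ0.le (by linarith)
            · rw [hGNgt _ _ _ hlive (by rw [htIe]; exact hcmp), hFBx s hs,
                if_neg (by omega : ¬ t ≤ n / ℓB)]
              exact ofReal_lip (by linarith) hγ0.le (by linarith)
          · rw [hGAp t ht]
            rcases lt_trichotomy t (n / ℓB) with hcmp | hcmp | hcmp
            · rw [hGNlt _ _ _ hlive (by rw [htIe]; exact hcmp), hFBp s hs, if_pos hcmp]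
              exact ofReal_lip (by linarith) hγ0.le (by linarith)
            · rw [hGNeq _ _ _ hlive (by rw [htIe]; exact hcmp), hGBp s hs,
                if_neg (by omega : ¬ t < n / ℓB)]
              by_cases hss : s < n % ℓB
              · rw [if_pos hss]
                exact ofReal_lip (by linarith) hγ0.le (by linarith)
              · rw [if_neg hss]
                exact ofReal_lip (by linarith) hγ0.le (by linarith)
            · rw [hGNgt _ _ _ hlive (by rw [htIe]; exact hcmp), hFBp s hs,
                if_neg (by omega : ¬ t < n / ℓB)]
              exact ofReal_lip (by linarith) hγ0.le (by linarith)
        · rw [hJtop _ _ _ _ hJc, add_top]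
          exact le_top
      · -- inr / inr
        obtain ⟨h1, h2, h3⟩ := hadj
        have heb : e = eb := h1
        have hib : i = ib := h2
        subst heb; subst hib
        rw [hwcopy e e i i q qb rfl rfl]
        by_cases hlive : ((i : Fin 2) = 0 ∧ ∃ t, t < ℓA ∧ (e : ↥A.M).1 = E t)
        · rcases lt_trichotomy (tI (e : ↥A.M).1) (n / ℓB) with hcmp | hcmp | hcmp
          · rw [hGNlt _ _ _ hlive hcmp, hGNlt _ _ _ hlive hcmp]
            exact hFBl q qb h3
          · rw [hGNeq _ _ _ hlive hcmp, hGNeq _ _ _ hlive hcmp]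
            exact hGBl q qb h3
          · rw [hGNgt _ _ _ hlive hcmp, hGNgt _ _ _ hlive hcmp]
            exact add_const_lip hc'.le (hFBb q).1 (hFBb qb).1 (hFBl q qb h3)
        · rw [hGNdead _ _ _ hlive, hGNdead _ _ _ hlive]
          simp only [ENNReal.ofReal_zero, zero_add]
          exact zero_le
    · -- bounds
      rintro (a | ⟨e, i, q⟩)
      · rw [hGNinl]
        have h1 := (hGAb a).1
        have h2 := (hGAb a).2
        constructor
        · nlinarith
        · nlinarith
      · by_cases hlive : ((i : Fin 2) = 0 ∧ ∃ t, t < ℓA ∧ (e : ↥A.M).1 = E t)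
        · rcases lt_trichotomy (tI (e : ↥A.M).1) (n / ℓB) with hcmp | hcmp | hcmp
          · rw [hGNlt _ _ _ hlive hcmp]
            have hb := hFBb q
            exact ⟨hb.1, by linarith [hb.2]⟩
          · rw [hGNeq _ _ _ hlive hcmp]
            exact hGBb q
          · rw [hGNgt _ _ _ hlive hcmp]
            have hb := hFBb q
            exact ⟨by linarith [hb.1], by linarith [hb.2]⟩
        · rw [hGNdead _ _ _ hlive]
          exact ⟨le_refl 0, by linarith⟩
    · -- values at the x points
      intro m hm
      rw [hxNval m hm]
      have hlive : ((0 : Fin 2) = 0 ∧ ∃ tb, tb < ℓA ∧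
          ((⟨E (m / ℓB), hEmem _ (hdivlt m hm)⟩ : ↥A.M) : A.V × A.V) = E tb) :=
        ⟨rfl, m / ℓB, hdivlt m hm, rfl⟩
      rcases lt_trichotomy (m / ℓB) (n / ℓB) with hcmp | hcmp | hcmp
      · rw [hGNlt _ _ _ hlive (by rw [htI _ (hdivlt m hm)]; exact hcmp),
          hFBx _ (hmodlt m hm), if_pos (le_of_lt (hdiv_lt_of m n hcmp))]
      · rw [hGNeq _ _ _ hlive (by rw [htI _ (hdivlt m hm)]; exact hcmp),
          hGBx _ (hmodlt m hm)]
        by_cases hss : m % ℓB ≤ n % ℓB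
        · rw [if_pos hss, if_pos ((hle_iff m n hcmp).mpr hss)]
        · rw [if_neg hss, if_neg (fun hmn => hss ((hle_iff m n hcmp).mp hmn))]
      · rw [hGNgt _ _ _ hlive (by rw [htI _ (hdivlt m hm)]; exact hcmp),
          hFBx _ (hmodlt m hm),
          if_neg (show ¬ m ≤ n by have := hdiv_lt_of n m hcmp; omega)]
        exact add_zero c'
    · -- values at the p points
      intro m hm
      rw [hpNval m hm]
      have hlive : ((0 : Fin 2) = 0 ∧ ∃ tb, tb < ℓA ∧
          ((⟨E (m / ℓB), hEmem _ (hdivlt m hm)⟩ : ↥A.M) : A.V × A.V) = E tb) :=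
        ⟨rfl, m / ℓB, hdivlt m hm, rfl⟩
      rcases lt_trichotomy (m / ℓB) (n / ℓB) with hcmp | hcmp | hcmp
      · rw [hGNlt _ _ _ hlive (by rw [htI _ (hdivlt m hm)]; exact hcmp),
          hFBp _ (hmodlt m hm), if_pos (hdiv_lt_of m n hcmp)]
      · rw [hGNeq _ _ _ hlive (by rw [htI _ (hdivlt m hm)]; exact hcmp),
          hGBp _ (hmodlt m hm)]
        by_cases hss : m % ℓB < n % ℓB
        · rw [if_pos hss, if_pos ((hlt_iff m n hcmp).mpr hss)]
        · rw [if_neg hss, if_neg (fun hmn => hss ((hlt_iff m n hcmp).mp hmn))]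
      · rw [hGNgt _ _ _ hlive (by rw [htI _ (hdivlt m hm)]; exact hcmp),
          hFBp _ (hmodlt m hm),
          if_neg (show ¬ m < n by have := hdiv_lt_of n m hcmp; omega)]
        ring

lemma main_lad : ∀ N k r : ℕ, k + r = N → 1 ≤ k → 1 ≤ r →
    Lad (GKRD 2 k r) (2 ^ ((k + r - 2).choose (r - 1))) (1 / (r : ℝ)) := by
  intro N
  induction N using Nat.strong_induction_on with
  | _ N ih =>
    intro k r hN hk hr
    rcases Nat.lt_or_ge k 2 with hk2 | hk2
    · -- k = 1
      have hk1 : k = 1 := by omega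
      subst hk1
      rw [show (1 + r - 2).choose (r - 1) = 1 from by
          rw [show 1 + r - 2 = r - 1 from by omega, Nat.choose_self],
        pow_one, show GKRD 2 1 r = base1 2 r from by rw [GKRD]]
      refine base_lad (dAryTree 2 r) (leaves 2 r)
        ⟨(0 : Fin 2) :: List.replicate (r - 1) 0, by
          rw [List.length_cons, List.length_replicate]; omega⟩
        ⟨(1 : Fin 2) :: List.replicate (r - 1) 0, by
          rw [List.length_cons, List.length_replicate]; omega⟩
        ⟨List.replicate (r - 1) (0 : Fin 2), by rw [List.length_replicate]; omega⟩
        ?_ ?_ ?_ ?_ ?_ _ (by positivity)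
      · show ((0 : Fin 2) :: List.replicate (r - 1) 0).length = r
        rw [List.length_cons, List.length_replicate]; omega
      · show ((1 : Fin 2) :: List.replicate (r - 1) 0).length = r
        rw [List.length_cons, List.length_replicate]; omega
      · intro h
        have h2 := congrArg Subtype.val h
        simp only [List.cons.injEq] at h2
        exact absurd h2.1 (by decide)
      · show (∃ i : Fin 2, _ = i :: _) ∨ (∃ i : Fin 2, _ = i :: _)
        exact Or.inr ⟨0, rfl⟩
      · show (∃ i : Fin 2, _ = i :: _) ∨ (∃ i : Fin 2, _ = i :: _)
        exact Or.inr ⟨1, rfl⟩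
    · obtain ⟨k2, rfl⟩ : ∃ k2, k = k2 + 2 := ⟨k - 2, by omega⟩
      rcases Nat.lt_or_ge r 2 with hr2 | hr2
      · -- r = 1
        have hr1 : r = 1 := by omega
        subst hr1
        rw [show (k2 + 2 + 1 - 2).choose (1 - 1) = 1 from by
            rw [show (1:ℕ) - 1 = 0 from rfl, Nat.choose_zero_right],
          pow_one, show GKRD 2 (k2 + 2) 1 = base2 2 (k2 + 2) from by rw [GKRD]]
        refine base_lad (dAryTreeCl 2 (k2 + 2)) (leaves 2 (k2 + 2))
          ⟨(0 : Fin 2) :: List.replicate (k2 + 1) 0, by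
            rw [List.length_cons, List.length_replicate]⟩
          ⟨(1 : Fin 2) :: List.replicate (k2 + 1) 0, by
            rw [List.length_cons, List.length_replicate]⟩
          ⟨List.replicate (k2 + 1) (0 : Fin 2), by rw [List.length_replicate]; omega⟩
          ?_ ?_ ?_ ?_ ?_ _ (by positivity)
        · show ((0 : Fin 2) :: List.replicate (k2 + 1) 0).length = k2 + 2
          rw [List.length_cons, List.length_replicate]
        · show ((1 : Fin 2) :: List.replicate (k2 + 1) 0).length = k2 + 2
          rw [List.length_cons, List.length_replicate]
        · intro h
          have h2 := congrArg Subtype.val h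
          simp only [List.cons.injEq] at h2
          exact absurd h2.1 (by decide)
        · show _ ≠ _ ∧ (_ <:+ _ ∨ _ <:+ _)
          refine ⟨?_, Or.inl (List.suffix_cons 0 _)⟩
          intro h
          have h2 := congrArg (fun a : TV 2 (k2 + 2) => a.1.length) h
          simp only [List.length_cons, List.length_replicate] at h2
          omega
        · show _ ≠ _ ∧ (_ <:+ _ ∨ _ <:+ _)
          refine ⟨?_, Or.inl (List.suffix_cons 1 _)⟩
          intro h
          have h2 := congrArg (fun a : TV 2 (k2 + 2) => a.1.length) h
          simp only [List.length_cons, List.length_replicate] at h2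
          omega
      · obtain ⟨r2, rfl⟩ : ∃ r2, r = r2 + 2 := ⟨r - 2, by omega⟩
        have IH1 := ih (k2 + 2 + (r2 + 1)) (by omega) (k2 + 2) (r2 + 1) rfl
          (by omega) (by omega)
        have IH2 := ih (k2 + 1 + (r2 + 2)) (by omega) (k2 + 1) (r2 + 2) rfl
          (by omega) (by omega)
        rw [show k2 + 2 + (r2 + 1) - 2 = k2 + r2 + 1 from by omega,
          show r2 + 1 - 1 = r2 from by omega] at IH1
        rw [show k2 + 1 + (r2 + 2) - 2 = k2 + r2 + 1 from by omega,
          show r2 + 2 - 1 = r2 + 1 from by omega] at IH2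
        have hrelq : (1 - 1 / ((r2 + 2 : ℕ) : ℝ)) * (1 / ((r2 + 1 : ℕ) : ℝ))
            = 1 / ((r2 + 2 : ℕ) : ℝ) := by
          have h1 : ((r2 : ℝ) + 1) ≠ 0 := by positivity
          have h2 : ((r2 : ℝ) + 2) ≠ 0 := by positivity
          push_cast
          field_simp
          ring
        have hstep := step_lad (GKRD 2 (k2 + 2) (r2 + 1)) (GKRD 2 (k2 + 1) (r2 + 2))
          (2 ^ ((k2 + r2 + 1).choose r2)) (2 ^ ((k2 + r2 + 1).choose (r2 + 1)))
          (1 / ((r2 + 1 : ℕ) : ℝ)) (1 / ((r2 + 2 : ℕ) : ℝ))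
          (by positivity) (by positivity) hrelq IH1 IH2
        rw [show GKRD 2 (k2 + 2) (r2 + 2)
            = stepGD 2 (GKRD 2 (k2 + 2) (r2 + 1)) (GKRD 2 (k2 + 1) (r2 + 2)) from by
          rw [GKRD]]
        rw [show (k2 + 2 + (r2 + 2) - 2).choose (r2 + 2 - 1)
            = (k2 + r2 + 1).choose r2 + (k2 + r2 + 1).choose (r2 + 1) from by
          rw [show k2 + 2 + (r2 + 2) - 2 = (k2 + r2 + 1) + 1 from by omega,
            show r2 + 2 - 1 = r2 + 1 from by omega]
          exact Nat.choose_succ_succ _ _]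
        rw [pow_add]
        exact hstep

theorem stmt_12 (ε : ℝ) (hε0 : 0 < ε) (hε1 : ε < 1) (k r : ℕ) (hk : 1 ≤ k) (hr : 1 ≤ r)
    (hrε : (r : ℝ) < (1 - ε) / ε) :
    ∃ w : Sym2 (GKRD 2 k r).V → ℝ≥0∞,
      ∃ x p : Fin (2 ^ ((k + r - 2).choose (r - 1))) → (GKRD 2 k r).V,
        IsLadder (gdist (GKRD 2 k r).G w) ε 1 (2 ^ ((k + r - 2).choose (r - 1))) x p ∧
        (∀ i, (x i, p i) ∈ (GKRD 2 k r).M ∨ (p i, x i) ∈ (GKRD 2 k r).M) ∧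
        (∀ i j, ENNReal.ofReal 1 ≤ gdist (GKRD 2 k r).G w (x j) (p i)) := by
  obtain ⟨w, x, p, hM, hA, ⟨F, hFl, hFb, hFx, hFp⟩, hG⟩ :=
    main_lad (k + r) k r rfl hk hr
  refine ⟨w, fun i => x i.1, fun i => p i.1, ⟨?_, ?_⟩, ?_, ?_⟩
  · intro i j hji
    show gdist (GKRD 2 k r).G w (p j.1) (x i.1) ≤ ENNReal.ofReal 1
    rw [ENNReal.ofReal_one]
    exact hA j.1 i.1 hji i.isLt
  · intro i
    show ENNReal.ofReal ((1 + ε) * 1) < gdist (GKRD 2 k r).G w (p i.1) (x i.1)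
    obtain ⟨Gt, hGl, hGb, hGx, hGp⟩ := hG i.1 i.isLt
    have hlow := hGl.le_gdist (p i.1) (x i.1)
    rw [hGp i.1 i.isLt, hGx i.1 i.isLt, if_neg (lt_irrefl _), if_pos (le_refl _),
      ENNReal.ofReal_zero, zero_add] at hlow
    refine lt_of_lt_of_le ?_ hlow
    have hr1 : (1 : ℝ) ≤ (r : ℝ) := by exact_mod_cast hr
    have hrpos : (0 : ℝ) < r := by linarith
    have h1 : (r : ℝ) * ε < 1 - ε := (lt_div_iff₀ hε0).1 hrε
    have h2 : ε < 1 / (r : ℝ) := by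
      rw [lt_div_iff₀ hrpos]
      nlinarith
    refine (ENNReal.ofReal_lt_ofReal_iff (by positivity)).mpr ?_
    rw [mul_one]
    linarith
  · intro i
    exact hM i.1 i.isLt
  · intro i j
    show ENNReal.ofReal 1 ≤ gdist (GKRD 2 k r).G w (x j.1) (p i.1)
    have h1 := hFl.le_gdist (p i.1) (x j.1)
    rw [hFp i.1 i.isLt, hFx j.1 j.isLt, ENNReal.ofReal_zero, zero_add,
      ENNReal.ofReal_one] at h1
    rw [ENNReal.ofReal_one, gdist_comm]
    exact h1

end ScatterDim
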